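/- (Expected hitting time of the Laplacian walk, ε-approximate case.) Suppose f is ε-approximately k-smooth and strictly positive at every vertex. For the Markov chain with the Laplacian-walk Metropolis–Hastings transition matrix built from the modified proposal, started at any vertex i, the hitting time T_hit = inf{t ≥ 0 : f(X_t) = max_l f_l} of the function maximum satisfies E_i[T_hit] ≤ (M ‖f‖₂²)^r / (f_max² f_min^{2(r−1)}), where M = k + 2k√n ε + n ε², f_max = max_l f_l and f_min = min_l f_l. -/

import Mathlib

open scoped ENNReal in
open scoped Classical in
/-- For a Markov chain on a finite state space `V` with one-step transition matrix `P`
started at `i`, the probability (under the canonical path-space law `ℙ_i`) that the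
hitting time `T_A = inf{t ≥ 0 : X_t ∈ A}` exceeds `t`, i.e. the probability that the
first `t + 1` states of the chain all avoid `A`:
`ℙ_i[T_A > t] = ∑_{v_0 = i, v_0,…,v_t ∉ A} ∏_{l<t} P(v_l, v_{l+1})`. -/
noncomputable def survivalProb {V : Type*} [Fintype V] [DecidableEq V]
    (P : Matrix V V ℝ) (A : Set V) (i : V) (t : ℕ) : ℝ :=
  ∑ v ∈ Finset.univ.filter
      (fun v : Fin (t + 1) → V => v 0 = i ∧ ∀ l : Fin (t + 1), v l ∉ A),
    ∏ l : Fin t, P (v l.castSucc) (v l.succ)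

/-- The expected hitting time `E_i[T_A]` of the set `A` for the Markov chain with
transition matrix `P` started at `i`, computed (in `ℝ≥0∞`) via the layer-cake formula
`E_i[T_A] = ∑_{t ≥ 0} ℙ_i[T_A > t]` for the `ℕ`-valued random variable `T_A`. -/
noncomputable def expectedHittingTime {V : Type*} [Fintype V] [DecidableEq V]
    (P : Matrix V V ℝ) (A : Set V) (i : V) : ENNReal :=
  ∑' t : ℕ, ENNReal.ofReal (survivalProb P A i t)

/-- The local cumulative coherence of order `k` at node `i`: the Euclidean norm
`‖U_kᵀ δ_i‖₂`, where `δ_i` is the `i`-th standard basis vector of `ℝ^n`. -/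
noncomputable def localCoherence {n k : ℕ} (Uk : Matrix (Fin n) (Fin k) ℝ)
    (i : Fin n) : ℝ :=
  Real.sqrt (∑ l, (Uk.transpose.mulVec (Pi.single i 1) l) ^ 2)

/-!
Write `B = M ‖f‖² - f_min²`. Approximate smoothness gives `f j ≤ (‖U_kᵀ δ_j‖ + ε) ‖f_ks‖`, the
weights `(‖U_kᵀ δ_l‖ + ε)²` sum to at most `M`, and the proposal from `i` misses the weight of `i`
itself; hence `Q' i j ≥ f j² / B` along every edge, and since the acceptance ratio compares this
with `Q' j i ≥ f i² / B`, also `P i j ≥ f j² / B`.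

For the truncated hitting times `E_x[min(T, m)]` take a maximiser `x₀` with value `H`. One step
of the chain shows that the deficit `H - E_x[min(T, m)]` grows by at most one along an edge and is
then divided by the transition probability. Following a walk of length `r` from `x₀` to the
maximum of `f`, where the deficit equals `H`, bounds `H` by `B / f_max² · ∑_{s<r} (B / f_min²)^s`,
and this is at most `(B + f_min²)^r / (f_max² f_min^{2(r-1)})`.
-/

open Finset

section MarkovChain

variable {V : Type*} [Fintype V] [DecidableEq V] (P : Matrix V V ℝ) (A : Set V)

theorem survivalProb_of_mem {i : V} (hi : i ∈ A) (t : ℕ) : survivalProb P A i t = 0 :=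
  sum_eq_zero fun v hv => by
    simp only [mem_filter] at hv
    exact absurd (hv.2.1 ▸ hi) (hv.2.2 0)

theorem survivalProb_zero_of_notMem {i : V} (hi : i ∉ A) : survivalProb P A i 0 = 1 := by
  rw [survivalProb, sum_filter, Fintype.sum_eq_single fun _ => i]
  · simp [hi]
  · intro v hv
    rw [if_neg]
    exact fun h => hv (funext fun l => Fin.fin_one_eq_zero l ▸ h.1)

theorem survivalProb_succ_of_notMem {i : V} (hi : i ∉ A) (t : ℕ) :
    survivalProb P A i (t + 1) = ∑ j, P i j * survivalProb P A j t := by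
  classical
  have hcond : ∀ x (u : Fin (t + 1) → V), ((Fin.cons x u : Fin (t + 2) → V) 0 = i ∧
      ∀ l, (Fin.cons x u : Fin (t + 2) → V) l ∉ A) ↔ x = i ∧ ∀ l, u l ∉ A := by
    intro x u
    simp only [Fin.forall_fin_succ, Fin.cons_zero, Fin.cons_succ]
    exact ⟨fun h => ⟨h.1, h.2.2⟩, fun h => ⟨h.1, h.1 ▸ hi, h.2⟩⟩
  have hprod : ∀ x (u : Fin (t + 1) → V), ∏ l : Fin (t + 1),
      P ((Fin.cons x u : Fin (t + 2) → V) l.castSucc) ((Fin.cons x u : Fin (t + 2) → V) l.succ) =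
      P x (u 0) * ∏ l : Fin t, P (u l.castSucc) (u l.succ) := by
    intro x u
    simp [Fin.prod_univ_succ]
  simp only [survivalProb, mul_sum, sum_filter]
  rw [← (Fin.consEquiv fun _ => V).sum_comp, Fintype.sum_prod_type]
  refine (sum_congr rfl fun x _ => sum_congr rfl fun u _ =>
    if_congr (hcond x u) (hprod x u) rfl).trans ?_
  simp only [ite_and, mul_ite, mul_zero]
  conv_rhs => rw [sum_comm]
  simp [sum_ite_eq]

theorem survivalProb_nonneg (hP : ∀ i j, 0 ≤ P i j) (i : V) (t : ℕ) :
    0 ≤ survivalProb P A i t :=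
  sum_nonneg fun _ _ => prod_nonneg fun _ _ => hP _ _

/-- `E_i[min(T_A, m)]`, by the same layer-cake formula as `expectedHittingTime`. -/
noncomputable def truncatedHittingTime (i : V) (m : ℕ) : ℝ :=
  ∑ t ∈ range m, survivalProb P A i t

theorem truncatedHittingTime_of_mem {i : V} (hi : i ∈ A) (m : ℕ) :
    truncatedHittingTime P A i m = 0 :=
  sum_eq_zero fun t _ => survivalProb_of_mem P A hi t

theorem truncatedHittingTime_succ_of_notMem {i : V} (hi : i ∉ A) (m : ℕ) :
    truncatedHittingTime P A i (m + 1) = 1 + ∑ j, P i j * truncatedHittingTime P A j m := by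
  simp only [truncatedHittingTime, sum_range_succ', survivalProb_succ_of_notMem P A hi,
    survivalProb_zero_of_notMem P A hi, mul_sum]
  rw [sum_comm, add_comm]

theorem truncatedHittingTime_le_succ (hP : ∀ i j, 0 ≤ P i j) (i : V) (m : ℕ) :
    truncatedHittingTime P A i m ≤ truncatedHittingTime P A i (m + 1) := by
  rw [truncatedHittingTime, truncatedHittingTime, sum_range_succ]
  exact le_add_of_nonneg_right (survivalProb_nonneg P A hP i m)

theorem mul_sub_truncatedHittingTime_le (hP : ∀ i j, 0 ≤ P i j) (hProw : ∀ i, ∑ j, P i j = 1)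
    {m : ℕ} {H : ℝ} (hH : ∀ j, truncatedHittingTime P A j m ≤ H) {x : V} (hx : x ∉ A) (z : V) :
    P x z * (H - truncatedHittingTime P A z m) ≤ 1 + (H - truncatedHittingTime P A x m) := by
  set T := fun j => truncatedHittingTime P A j m
  have hrest : ∑ j ∈ univ.erase z, P x j * T j ≤ (1 - P x z) * H := by
    rw [← hProw x, ← sum_erase_add _ _ (mem_univ z), add_sub_cancel_right, sum_mul]
    exact sum_le_sum fun j _ => mul_le_mul_of_nonneg_left (hH j) (hP x j)
  have hstep : T x ≤ 1 + P x z * T z + ∑ j ∈ univ.erase z, P x j * T j := by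
    calc T x ≤ truncatedHittingTime P A x (m + 1) := truncatedHittingTime_le_succ P A hP x m
      _ = _ := by
        rw [truncatedHittingTime_succ_of_notMem P A hx, ← sum_erase_add _ _ (mem_univ z)]
        ring
  linarith

theorem expectedHittingTime_le_ofReal (hP : ∀ i j, 0 ≤ P i j) {i : V} {K : ℝ}
    (hK : ∀ m, truncatedHittingTime P A i m ≤ K) :
    expectedHittingTime P A i ≤ ENNReal.ofReal K := by
  refine ENNReal.tsum_le_of_sum_range_le fun m => ?_
  rw [← ENNReal.ofReal_sum_of_nonneg fun t _ => survivalProb_nonneg P A hP i t]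
  exact ENNReal.ofReal_le_ofReal (hK m)

end MarkovChain

theorem le_mul_geom_sum_of_path {V : Type*} {A : Set V} {P : V → V → ℝ} {Φ q : V → ℝ}
    {H κ y : ℝ} {r : ℕ} (v : Fin (r + 1) → V)
    (hq : ∀ x, 0 < q x) (hqy : ∀ x, (q x)⁻¹ ≤ y) (hqκ : ∀ x ∈ A, (q x)⁻¹ ≤ κ)
    (hΦ : ∀ x, 0 ≤ Φ x) (hΦA : ∀ x ∈ A, Φ x = H)
    (hstep : ∀ x z, x ∉ A → P x z * Φ z ≤ 1 + Φ x)
    (hv0 : Φ (v 0) = 0) (hvr : v (Fin.last r) ∈ A)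
    (hedge : ∀ l : Fin r, q (v l.succ) ≤ P (v l.castSucc) (v l.succ)) :
    H ≤ κ * ∑ s ∈ range r, y ^ s := by
  have hy : 0 ≤ y := (inv_pos.2 (hq (v 0))).le.trans (hqy _)
  have hgeom_mono : ∀ t ≤ r, ∑ s ∈ range t, y ^ s ≤ ∑ s ∈ range r, y ^ s := fun t ht =>
    sum_le_sum_of_subset_of_nonneg (range_subset_range.2 ht) fun s _ _ => pow_nonneg hy s
  have hin_A : ∀ x ∈ A, ∀ t ≤ r, Φ x ≤ (q x)⁻¹ * ∑ s ∈ range t, y ^ s →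
      H ≤ κ * ∑ s ∈ range r, y ^ s := fun x hx t ht hΦx =>
    calc H = Φ x := (hΦA x hx).symm
      _ ≤ (q x)⁻¹ * ∑ s ∈ range t, y ^ s := hΦx
      _ ≤ κ * ∑ s ∈ range r, y ^ s :=
        mul_le_mul (hqκ x hx) (hgeom_mono t ht) (sum_nonneg fun s _ => pow_nonneg hy s)
          ((inv_pos.2 (hq x)).le.trans (hqκ x hx))
  have key : ∀ t : Fin (r + 1), H ≤ κ * ∑ s ∈ range r, y ^ s ∨
      Φ (v t) ≤ (q (v t))⁻¹ * ∑ s ∈ range t, y ^ s := by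
    intro t
    induction t using Fin.induction with
    | zero => exact Or.inr (by simp [hv0])
    | succ l ih =>
      refine ih.elim Or.inl fun hl => ?_
      by_cases hA : v l.castSucc ∈ A
      · exact Or.inl (hin_A _ hA l l.is_lt.le hl)
      right
      have hz := hq (v l.succ)
      have hqΦ : q (v l.succ) * Φ (v l.succ) ≤ ∑ s ∈ range (l + 1), y ^ s :=
        calc q (v l.succ) * Φ (v l.succ) ≤ P (v l.castSucc) (v l.succ) * Φ (v l.succ) :=
              mul_le_mul_of_nonneg_right (hedge l) (hΦ _)
          _ ≤ 1 + Φ (v l.castSucc) := hstep _ _ hA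
          _ ≤ 1 + y * ∑ s ∈ range l, y ^ s := by
              gcongr
              exact hl.trans (mul_le_mul_of_nonneg_right (hqy _)
                (sum_nonneg fun s _ => pow_nonneg hy s))
          _ = ∑ s ∈ range (l + 1), y ^ s := by rw [geom_sum_succ, add_comm]
      rw [Fin.val_succ, inv_mul_eq_div, le_div_iff₀ hz, mul_comm]
      exact hqΦ
  exact (key (Fin.last r)).elim id fun h => hin_A _ hvr r le_rfl (by simpa using h)

theorem expectedHittingTime_le_of_forall_path {V : Type*} [Fintype V] [DecidableEq V]
    {P : Matrix V V ℝ} (hP : ∀ i j, 0 ≤ P i j) (hProw : ∀ i, ∑ j, P i j = 1) {A : Set V}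
    {q : V → ℝ} {κ y : ℝ} (hq : ∀ x, 0 < q x) (hqy : ∀ x, (q x)⁻¹ ≤ y)
    (hqκ : ∀ x ∈ A, (q x)⁻¹ ≤ κ) {r : ℕ}
    (hpath : ∀ x, ∃ v : Fin (r + 1) → V, v 0 = x ∧ v (Fin.last r) ∈ A ∧
      ∀ l : Fin r, q (v l.succ) ≤ P (v l.castSucc) (v l.succ))
    (i : V) :
    expectedHittingTime P A i ≤ ENNReal.ofReal (κ * ∑ s ∈ range r, y ^ s) := by
  refine expectedHittingTime_le_ofReal P A hP fun m => ?_
  obtain ⟨x₀, -, hx₀⟩ := exists_max_image univ (truncatedHittingTime P A · m) ⟨i, mem_univ i⟩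
  have hmax : ∀ j, truncatedHittingTime P A j m ≤ truncatedHittingTime P A x₀ m :=
    fun j => hx₀ j (mem_univ j)
  obtain ⟨v, hv0, hvr, hedge⟩ := hpath x₀
  refine (hmax i).trans (le_mul_geom_sum_of_path v hq hqy hqκ
    (Φ := fun j => truncatedHittingTime P A x₀ m - truncatedHittingTime P A j m)
    (fun j => sub_nonneg.2 (hmax j)) (fun j hj => ?_)
    (fun x z hx => mul_sub_truncatedHittingTime_le P A hP hProw hmax hx z)
    (by simp [hv0]) hvr hedge)
  simp [truncatedHittingTime_of_mem P A hj]

section Coherence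

open Matrix

variable {n k : ℕ} (Uk : Matrix (Fin n) (Fin k) ℝ)

theorem localCoherence_eq_sqrt (j : Fin n) : localCoherence Uk j = √(∑ l, Uk j l ^ 2) := by
  simp [localCoherence, mulVec_single]

theorem localCoherence_sq (j : Fin n) : localCoherence Uk j ^ 2 = ∑ l, Uk j l ^ 2 := by
  rw [localCoherence_eq_sqrt, Real.sq_sqrt (by positivity)]

theorem sum_localCoherence_sq (hU : Ukᵀ * Uk = 1) :
    ∑ j, localCoherence Uk j ^ 2 = k := by
  have htrace := congrArg trace hU
  simp only [trace, Matrix.diag, mul_apply, transpose_apply, one_apply_eq, sum_const, card_univ,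
    Fintype.card_fin, nsmul_eq_mul, mul_one, ← sq] at htrace
  simp only [localCoherence_sq]
  rw [sum_comm, htrace]

theorem sum_localCoherence_le (hU : Ukᵀ * Uk = 1) :
    ∑ j, localCoherence Uk j ≤ k * √n := by
  have hk : (k : ℝ) ≤ k ^ 2 := by exact_mod_cast Nat.le_self_pow two_ne_zero k
  calc ∑ j, localCoherence Uk j = ∑ j, localCoherence Uk j * 1 := by simp
    _ ≤ √(∑ j, localCoherence Uk j ^ 2) * √(∑ _j : Fin n, (1 : ℝ) ^ 2) :=
      Real.sum_mul_le_sqrt_mul_sqrt _ _ _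
    _ = √k * √n := by simp [sum_localCoherence_sq Uk hU]
    _ ≤ k * √n := by
      gcongr
      exact Real.sqrt_le_iff.2 ⟨by positivity, hk.trans_eq (by ring)⟩

theorem sum_localCoherence_add_sq_le (hU : Ukᵀ * Uk = 1) {ε : ℝ} (hε : 0 ≤ ε) :
    ∑ j, (localCoherence Uk j + ε) ^ 2 ≤ k + 2 * k * √n * ε + n * ε ^ 2 := by
  have h := mul_le_mul_of_nonneg_left (sum_localCoherence_le Uk hU) (by positivity : 0 ≤ 2 * ε)
  simp only [add_sq, sum_add_distrib, sum_localCoherence_sq Uk hU, ← sum_mul, ← mul_sum,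
    sum_const, card_univ, Fintype.card_fin, nsmul_eq_mul] at h ⊢
  linarith

end Coherence

section Projection

open Matrix

variable {n k : ℕ} {Uk : Matrix (Fin n) (Fin k) ℝ}

theorem dotProduct_mulVec_self (hU : Ukᵀ * Uk = 1) (x : Fin k → ℝ) :
    Uk *ᵥ x ⬝ᵥ Uk *ᵥ x = x ⬝ᵥ x := by
  rw [dotProduct_mulVec, ← mulVec_transpose, mulVec_mulVec, hU, one_mulVec]

theorem dotProduct_mulVec_transpose_mulVec (f : Fin n → ℝ) :
    f ⬝ᵥ Uk *ᵥ (Ukᵀ *ᵥ f) = Ukᵀ *ᵥ f ⬝ᵥ Ukᵀ *ᵥ f := by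
  rw [dotProduct_mulVec, ← mulVec_transpose]

theorem projection_apply_le (hU : Ukᵀ * Uk = 1) (f : Fin n → ℝ) (j : Fin n) :
    (Uk *ᵥ (Ukᵀ *ᵥ f)) j ≤ localCoherence Uk j * √(∑ i, (Uk *ᵥ (Ukᵀ *ᵥ f)) i ^ 2) := by
  have hnorm : ∑ i, (Uk *ᵥ (Ukᵀ *ᵥ f)) i ^ 2 = ∑ l, (Ukᵀ *ᵥ f) l ^ 2 := by
    simpa only [dotProduct, sq] using dotProduct_mulVec_self hU (Ukᵀ *ᵥ f)
  rw [hnorm, localCoherence_eq_sqrt]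
  exact Real.sum_mul_le_sqrt_mul_sqrt univ (Uk j) (Ukᵀ *ᵥ f)

theorem sum_sq_projection_le (hU : Ukᵀ * Uk = 1) (f : Fin n → ℝ) :
    ∑ i, (Uk *ᵥ (Ukᵀ *ᵥ f)) i ^ 2 ≤ ∑ i, f i ^ 2 := by
  set g := Uk *ᵥ (Ukᵀ *ᵥ f)
  have hfg : f ⬝ᵥ g = g ⬝ᵥ g := by
    rw [dotProduct_mulVec_transpose_mulVec, dotProduct_mulVec_self hU]
  have : 0 ≤ ∑ i, (f i - g i) ^ 2 := by positivity
  simp only [dotProduct, ← sq] at hfg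
  simp only [sub_sq, sum_add_distrib, sum_sub_distrib, mul_assoc, ← mul_sum, hfg] at this
  linarith

theorem sq_le_localCoherence_add_sq_mul (hU : Ukᵀ * Uk = 1) {f fks : Fin n → ℝ}
    (hfks : fks = Uk *ᵥ (Ukᵀ *ᵥ f)) {ε : ℝ} {j : Fin n}
    (happrox : |f j - fks j| ≤ ε * √(∑ i, fks i ^ 2)) (hfj : 0 ≤ f j) :
    f j ^ 2 ≤ (localCoherence Uk j + ε) ^ 2 * ∑ i, fks i ^ 2 := by
  subst hfks
  have hproj := projection_apply_le hU f j
  have happrox' := (le_abs_self _).trans happrox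
  calc f j ^ 2 ≤ ((localCoherence Uk j + ε) * √(∑ i, (Uk *ᵥ (Ukᵀ *ᵥ f)) i ^ 2)) ^ 2 :=
        pow_le_pow_left₀ hfj (by linarith) 2
    _ = _ := by rw [mul_pow, Real.sq_sqrt (by positivity)]

end Projection

section NeighbourProposal

variable {V : Type*} [Fintype V] {W : Matrix V V ℝ} {a : V → ℝ}

noncomputable def neighbourProposal (W : Matrix V V ℝ) (a : V → ℝ) : Matrix V V ℝ :=
  fun i j => W i j * a j / ∑ l, W i l * a l

theorem neighbourProposal_nonneg (hW : ∀ i j, W i j = 0 ∨ W i j = 1) (ha : ∀ j, 0 ≤ a j)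
    (i j : V) : 0 ≤ neighbourProposal W a i j := by
  have hW0 : ∀ l, 0 ≤ W i l := fun l => by rcases hW i l with h | h <;> simp [h]
  exact div_nonneg (mul_nonneg (hW0 j) (ha j)) (sum_nonneg fun l _ => mul_nonneg (hW0 l) (ha l))

theorem sum_neighbourProposal_le_one (i : V) : ∑ j, neighbourProposal W a i j ≤ 1 := by
  simp only [neighbourProposal, ← sum_div]
  exact div_self_le_one _

theorem sq_div_le_neighbourProposal {f : V → ℝ} {F G M B : ℝ} {i j : V}
    (hW : ∀ i j, W i j = 0 ∨ W i j = 1) (hWdiag : ∀ i, W i i = 0) (hij : W i j = 1)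
    (ha : ∀ l, 0 ≤ a l) (hfa : ∀ l, f l ^ 2 ≤ a l * F) (hM : ∑ l, a l ≤ M) (hFG : F ≤ G)
    (hB : M * G - f i ^ 2 ≤ B) (hfj : f j ≠ 0) :
    0 < B ∧ f j ^ 2 / B ≤ neighbourProposal W a i j := by
  classical
  set D := ∑ l, W i l * a l with hDdef
  have hWa : ∀ l, 0 ≤ W i l * a l ∧ W i l * a l ≤ a l := fun l => by
    rcases hW i l with h | h <;> simp [h, ha l]
  have hfj2 : 0 < f j ^ 2 := by positivity
  have hF : 0 < F := pos_of_mul_pos_right (hfj2.trans_le (hfa j)) (ha j)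
  have hD : 0 < D := by
    have haj : 0 < a j := pos_of_mul_pos_left (hfj2.trans_le (hfa j)) hF.le
    refine haj.trans_le ?_
    simpa [hij] using single_le_sum (f := fun l => W i l * a l) (fun l _ => (hWa l).1) (mem_univ j)
  have hDi : D ≤ ∑ l, a l - a i := by
    rw [← sum_erase_eq_sub (mem_univ i), hDdef, ← sum_erase_add _ _ (mem_univ i), hWdiag,
      zero_mul, add_zero]
    exact sum_le_sum fun l _ => (hWa l).2
  have hFD : F * D ≤ B :=
    calc F * D ≤ F * ∑ l, a l - a i * F := by nlinarith
      _ ≤ G * M - f i ^ 2 := by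
        have := mul_le_mul hFG hM (sum_nonneg fun l _ => ha l) (hF.le.trans hFG)
        linarith [hfa i]
      _ ≤ B := by linarith
  refine ⟨(mul_pos hF hD).trans_le hFD, ?_⟩
  calc f j ^ 2 / B ≤ f j ^ 2 / (F * D) := div_le_div_of_nonneg_left hfj2.le (mul_pos hF hD) hFD
    _ ≤ a j * F / (F * D) := by gcongr; exact hfa j
    _ = neighbourProposal W a i j := by
      rw [neighbourProposal, hij, one_mul, ← hDdef]
      field_simp

end NeighbourProposal

section MetropolisHastings

variable {V : Type*} [Fintype V] {W Q P : Matrix V V ℝ} {π : V → ℝ}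

theorem le_mul_min_one_of_le_proposal {πi πj qij qji c : ℝ} (hπi : 0 < πi) (hπj : 0 ≤ πj)
    (hqij : 0 < qij) (hij : c * πj ≤ qij) (hji : c * πi ≤ qji) :
    c * πj ≤ qij * min 1 (πj * qji / (πi * qij)) := by
  rw [mul_min_of_nonneg _ _ hqij.le, mul_one]
  refine le_min hij ?_
  have hsimp : qij * (πj * qji / (πi * qij)) = πj * qji / πi := by field_simp
  rw [hsimp, le_div_iff₀ hπi, mul_right_comm, mul_comm _ πj]
  exact mul_le_mul_of_nonneg_left hji hπj

theorem sum_eq_one_of_diag_eq_one_sub [DecidableEq V]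
    (hPdiag : ∀ i, P i i = 1 - ∑ j ∈ univ.erase i, P i j) (i : V) : ∑ j, P i j = 1 := by
  rw [← sum_erase_add _ _ (mem_univ i), hPdiag]
  ring

theorem metropolisHastings_nonneg [DecidableEq V] (hπ : ∀ i, 0 ≤ π i) (hQ : ∀ i j, 0 ≤ Q i j)
    (hQrow : ∀ i, ∑ j, Q i j ≤ 1) (hW01 : ∀ i j, W i j = 0 ∨ W i j = 1)
    (hP1 : ∀ i j, j ≠ i → W i j = 1 → P i j = Q i j * min 1 ((π j * Q j i) / (π i * Q i j)))
    (hP0 : ∀ i j, j ≠ i → W i j = 0 → P i j = 0)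
    (hPdiag : ∀ i, P i i = 1 - ∑ j ∈ univ.erase i, P i j) (i j : V) :
    0 ≤ P i j := by
  have hoff : ∀ i j, j ≠ i → 0 ≤ P i j ∧ P i j ≤ Q i j := fun i j hji => by
    rcases hW01 i j with h | h
    · rw [hP0 i j hji h]
      exact ⟨le_rfl, hQ i j⟩
    · rw [hP1 i j hji h]
      exact ⟨mul_nonneg (hQ i j) (le_min zero_le_one (by positivity [hπ i, hπ j, hQ i j, hQ j i])),
        mul_le_of_le_one_right (hQ i j) (min_le_left _ _)⟩
  obtain rfl | hji := eq_or_ne j i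
  · have hPQ : ∑ l ∈ univ.erase j, P j l ≤ ∑ l ∈ univ.erase j, Q j l :=
      sum_le_sum fun l hl => (hoff j l (ne_of_mem_erase hl)).2
    have hQ_erase : ∑ l ∈ univ.erase j, Q j l ≤ ∑ l, Q j l :=
      sum_le_sum_of_subset_of_nonneg (erase_subset _ _) fun l _ _ => hQ j l
    linarith [hPdiag j, hQrow j]
  · exact (hoff i j hji).1

theorem sq_div_le_metropolisHastings {f : V → ℝ} {B : ℝ} (hB : 0 < B) (hf : ∀ i, 0 < f i)
    (hWsymm : ∀ i j, W i j = W j i) (hWdiag : ∀ i, W i i = 0)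
    (hπ : ∀ i, π i = f i ^ 2 / ∑ j, f j ^ 2) (hQ : ∀ i j, W i j = 1 → f j ^ 2 / B ≤ Q i j)
    (hP1 : ∀ i j, j ≠ i → W i j = 1 → P i j = Q i j * min 1 ((π j * Q j i) / (π i * Q i j)))
    {i j : V} (hij : W i j = 1) :
    f j ^ 2 / B ≤ P i j := by
  have hji : j ≠ i := by
    rintro rfl
    simp [hWdiag] at hij
  have hG : 0 < ∑ l, f l ^ 2 := sum_pos (fun l _ => by positivity [hf l]) ⟨i, mem_univ i⟩
  have hc : ∀ l, f l ^ 2 / B = (∑ l, f l ^ 2) / B * π l := fun l => by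
    rw [hπ]
    field_simp
  have hπpos : ∀ l, 0 < π l := fun l => by
    rw [hπ]
    positivity [hf l]
  rw [hP1 i j hji hij, hc]
  exact le_mul_min_one_of_le_proposal (hπpos i) (hπpos j).le
    ((div_pos (by positivity [hf j]) hB).trans_le (hQ i j hij)) (hc j ▸ hQ i j hij)
    (hc i ▸ hQ j i (hWsymm i j ▸ hij))

end MetropolisHastings

theorem div_mul_geom_sum_le {a b φ : ℝ} (ha : 0 < a) (hb : 0 ≤ b) (hφ : 0 < φ) (r : ℕ) :
    b / φ * ∑ s ∈ range r, (b / a) ^ s ≤ (b + a) ^ r / (φ * a ^ (r - 1)) := by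
  have hterm : ∀ s ∈ range r, b / φ * (b / a) ^ s * (φ * a ^ (r - 1)) =
      b ^ s * a ^ (r - 1 - s) * b := fun s hs => by
    rw [← Nat.add_sub_cancel' (Nat.le_sub_one_of_lt (mem_range.1 hs)), pow_add,
      Nat.add_sub_cancel_left, div_pow]
    field_simp
  have hgeom := geom_sum₂_mul (b + a) a r
  rw [add_sub_cancel_right] at hgeom
  rw [le_div_iff₀ (by positivity), mul_sum, sum_mul, sum_congr rfl hterm]
  calc ∑ s ∈ range r, b ^ s * a ^ (r - 1 - s) * b
      ≤ ∑ s ∈ range r, (b + a) ^ s * a ^ (r - 1 - s) * b := by gcongr; linarith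
    _ = (b + a) ^ r - a ^ r := by rw [← sum_mul, hgeom]
    _ ≤ (b + a) ^ r := sub_le_self _ (by positivity)

theorem laplacian_walk_expected_hitting_time_approx_ksmooth_general
    {n : ℕ}
    (W : Matrix (Fin n) (Fin n) ℝ)
    (hWsymm : ∀ i j, W i j = W j i)
    (hW01 : ∀ i j, W i j = 0 ∨ W i j = 1)
    (hWdiag : ∀ i, W i i = 0)
    (r : ℕ) (hr1 : 1 ≤ r)
    (hWconn : ∀ i j : Fin n, ∃ v : Fin (r + 1) → Fin n,
      v 0 = i ∧ v (Fin.last r) = j ∧ ∀ l : Fin r, W (v l.castSucc) (v l.succ) = 1)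
    {k : ℕ}
    (Uk : Matrix (Fin n) (Fin k) ℝ)
    (hU : Uk.transpose * Uk = 1)
    (f : Fin n → ℝ) (ε : ℝ) (hε : 0 < ε)
    (fks : Fin n → ℝ) (hfks : fks = Uk.mulVec (Uk.transpose.mulVec f))
    (happrox : ∀ i, |f i - fks i| ≤ ε * Real.sqrt (∑ j, fks j ^ 2))
    (hfpos : ∀ i, 0 < f i)
    (pf : Fin n → ℝ) (hpf : ∀ i, pf i = f i ^ 2 / ∑ j, f j ^ 2)
    (Q' : Matrix (Fin n) (Fin n) ℝ)
    (hQ' : ∀ i j, Q' i j =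
      W i j * (localCoherence Uk j + ε) ^ 2 / ∑ l, W i l * (localCoherence Uk l + ε) ^ 2)
    (P : Matrix (Fin n) (Fin n) ℝ)
    (hP1 : ∀ i j, j ≠ i → W i j = 1 →
      P i j = Q' i j * min 1 ((pf j * Q' j i) / (pf i * Q' i j)))
    (hP0 : ∀ i j, j ≠ i → W i j = 0 → P i j = 0)
    (hPdiag : ∀ i, P i i = 1 - ∑ j ∈ Finset.univ.erase i, P i j)
    (fmax fmin : ℝ)
    (hfmax : IsGreatest (Set.range f) fmax) (hfmin : IsLeast (Set.range f) fmin)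
    (i : Fin n) :
    expectedHittingTime P {j | f j = fmax} i ≤
      ENNReal.ofReal ((((k : ℝ) + 2 * k * Real.sqrt n * ε + n * ε ^ 2) * ∑ j, f j ^ 2) ^ r /
        (fmax ^ 2 * fmin ^ (2 * (r - 1)))) := by
  obtain ⟨jM, hjM⟩ := hfmax.1
  obtain ⟨jm, rfl⟩ := hfmin.1
  have hfmin_le : ∀ j, f jm ^ 2 ≤ f j ^ 2 := fun j =>
    pow_le_pow_left₀ (hfpos jm).le (hfmin.2 ⟨j, rfl⟩) 2
  obtain ⟨B, hBdef⟩ : ∃ B, B + f jm ^ 2 = ((k : ℝ) + 2 * k * √n * ε + n * ε ^ 2) * ∑ j, f j ^ 2 :=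
    ⟨_, sub_add_cancel _ _⟩
  obtain rfl : Q' = neighbourProposal W fun l => (localCoherence Uk l + ε) ^ 2 :=
    funext₂ hQ'
  have hQ'lb : ∀ i j, W i j = 1 → 0 < B ∧ f j ^ 2 / B ≤ neighbourProposal W _ i j :=
    fun i j hij => sq_div_le_neighbourProposal hW01 hWdiag hij (fun _ => sq_nonneg _)
      (fun l => sq_le_localCoherence_add_sq_mul hU hfks (happrox l) (hfpos l).le)
      (sum_localCoherence_add_sq_le Uk hU hε.le) (hfks ▸ sum_sq_projection_le hU f)
      (by linarith [hfmin_le i]) (hfpos j).ne'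
  have hB : 0 < B := by
    obtain ⟨v, -, -, hv⟩ := hWconn i i
    exact (hQ'lb _ _ (hv ⟨0, hr1⟩)).1
  have hP := metropolisHastings_nonneg (fun i => by rw [hpf]; positivity)
    (neighbourProposal_nonneg hW01 fun _ => sq_nonneg _) sum_neighbourProposal_le_one hW01 hP1 hP0
    hPdiag
  refine (expectedHittingTime_le_of_forall_path hP (sum_eq_one_of_diag_eq_one_sub hPdiag) (q := fun x => f x ^ 2 / B)
    (κ := B / fmax ^ 2) (y := B / f jm ^ 2) (r := r) (fun x => by positivity [hfpos x])
    (fun x => ?_) (fun x hx => by rw [inv_div, hx]) (fun x => ?_) i).trans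
    (ENNReal.ofReal_le_ofReal ?_)
  · rw [inv_div]
    exact div_le_div_of_nonneg_left hB.le (pow_pos (hfpos jm) 2) (hfmin_le x)
  · obtain ⟨v, hv0, hvr, hv⟩ := hWconn x jM
    exact ⟨v, hv0, hvr ▸ hjM, fun l => sq_div_le_metropolisHastings hB hfpos hWsymm hWdiag hpf
      (fun i j hij => (hQ'lb i j hij).2) hP1 (hv l)⟩
  · have := div_mul_geom_sum_le (pow_pos (hfpos jm) 2) hB.le (pow_pos (hjM ▸ hfpos jM) 2) r
    rwa [hBdef, ← pow_mul] at this

/-- Expected hitting time of the Laplacian walk, `ε`-approximate case: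
suppose `f` is `ε`-approximately `k`-smooth and strictly positive at every vertex.  For
the Markov chain with the Laplacian-walk Metropolis–Hastings transition matrix built
from the modified proposal, started at any vertex `i`, the hitting time
`T_hit = inf{t ≥ 0 : f(X_t) = max_l f l}` of the function maximum satisfies
`E_i[T_hit] ≤ (M ‖f‖₂²)^r / (f_max² f_min^{2(r−1)})`, where `M = k + 2k√n ε + n ε²`. -/
theorem laplacian_walk_expected_hitting_time_approx_ksmooth
    {n : ℕ} (hn : 2 ≤ n)
    (W : Matrix (Fin n) (Fin n) ℝ)
    (hWsymm : ∀ i j, W i j = W j i)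
    (hW01 : ∀ i j, W i j = 0 ∨ W i j = 1)
    (hWdiag : ∀ i, W i i = 0)
    (hdegpos : ∀ i, 0 < ∑ j, W i j)
    (r : ℕ) (hr1 : 1 ≤ r)
    (hWconn : ∀ i j : Fin n, ∃ v : Fin (r + 1) → Fin n,
      v 0 = i ∧ v (Fin.last r) = j ∧ ∀ l : Fin r, W (v l.castSucc) (v l.succ) = 1)
    {k : ℕ} (hk1 : 1 ≤ k) (hkn : k ≤ n)
    (Uk : Matrix (Fin n) (Fin k) ℝ)
    (hU : Uk.transpose * Uk = 1)
    (f : Fin n → ℝ) (ε : ℝ) (hε : 0 < ε)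
    (fks : Fin n → ℝ) (hfks : fks = Uk.mulVec (Uk.transpose.mulVec f))
    (happrox : ∀ i, |f i - fks i| ≤ ε * Real.sqrt (∑ j, fks j ^ 2))
    (hfpos : ∀ i, 0 < f i)
    (pf : Fin n → ℝ) (hpf : ∀ i, pf i = f i ^ 2 / ∑ j, f j ^ 2)
    (Q' : Matrix (Fin n) (Fin n) ℝ)
    (hQ' : ∀ i j, Q' i j =
      W i j * (localCoherence Uk j + ε) ^ 2 / ∑ l, W i l * (localCoherence Uk l + ε) ^ 2)
    (P : Matrix (Fin n) (Fin n) ℝ)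
    (hP1 : ∀ i j, j ≠ i → W i j = 1 →
      P i j = Q' i j * min 1 ((pf j * Q' j i) / (pf i * Q' i j)))
    (hP0 : ∀ i j, j ≠ i → W i j = 0 → P i j = 0)
    (hPdiag : ∀ i, P i i = 1 - ∑ j ∈ Finset.univ.erase i, P i j)
    (fmax fmin : ℝ)
    (hfmax : IsGreatest (Set.range f) fmax) (hfmin : IsLeast (Set.range f) fmin)
    (i : Fin n) :
    expectedHittingTime P {j | f j = fmax} i ≤
      ENNReal.ofReal ((((k : ℝ) + 2 * k * Real.sqrt n * ε + n * ε ^ 2) * ∑ j, f j ^ 2) ^ r /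
        (fmax ^ 2 * fmin ^ (2 * (r - 1)))) :=
  laplacian_walk_expected_hitting_time_approx_ksmooth_general W hWsymm hW01 hWdiag r hr1 hWconn Uk
    hU f ε hε fks hfks happrox hfpos pf hpf Q' hQ' P hP1 hP0 hPdiag fmax fmin hfmax hfmin i
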